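/- arXiv:1710.00172 — 6 statements merged into one kernel-verified Lean document; each statement's English description precedes it below -/
import Mathlib

section
/- If (Q,·) and (R,∘) are quasigroups and there exist bijections α, β, γ : Q → R such that α(x) ∘ β(y) = γ(x·y) for all x, y ∈ Q (i.e., Q and R are isotopic), and both Q and R are groups, then Q and R are isomorphic as groups. -/
/-- If two groups are isotopic as quasigroups (there exist bijections `α, β, γ` with
`α x ∘ β y = γ (x · y)`), then they are isomorphic as groups. -/
theorem isotopic_groups_isomorphic {Q R : Type*} [Group Q] [Group R]
    (α β γ : Q ≃ R) (h : ∀ x y : Q, α x * β y = γ (x * y)) :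
    Nonempty (Q ≃* R) := by
  set a : R := α 1 with ha
  set b : R := β 1 with hb
  -- γ x = α x * b and γ x = a * β x
  have hγ1 : ∀ x : Q, γ x = α x * b := fun x => by
    have := h x 1; simpa using this.symm
  have hγ2 : ∀ x : Q, γ x = a * β x := fun x => by
    have := h 1 x; simpa using this.symm
  have hβ : ∀ x : Q, β x = a⁻¹ * α x * b := fun x => by
    have := (hγ1 x).symm.trans (hγ2 x)
    rw [mul_assoc, this, ← mul_assoc, inv_mul_cancel, one_mul]
  refine ⟨{ toEquiv := α.trans (Equiv.mulLeft a⁻¹), map_mul' := ?_ }⟩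
  intro x y
  have key : α x * β y = α (x * y) * b := by rw [h x y, hγ1]
  rw [hβ] at key
  show a⁻¹ * α (x*y) = (a⁻¹ * α x) * (a⁻¹ * α y)
  have : α (x * y) = α x * a⁻¹ * α y := by
    have key2 : (α x * a⁻¹ * α y) * b = α (x * y) * b := by rw [← key]; group
    exact (mul_right_cancel key2).symm
  rw [this]; group
end

section
/- Let Q be a finite quasigroup, let Λ = (α₁,α₂,α₃) be a dual multinet labeled by Q in PG(2,K), and let ℓ be a line belonging to Λ. Set Sᵢ = {x ∈ Q : αᵢ(x) ∈ ℓ} for i = 1,2,3. Then S₁·S₂ ⊆ S₃, S₃/S₂ ⊆ S₁, S₁\S₃ ⊆ S₂, and in particular |S₁| = |S₂| = |S₃|. -/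
open Matrix

noncomputable section

/-- The projective plane over `K`, as the projectivization of `K³`. -/
abbrev PP (K : Type*) [Field K] := Projectivization K (Fin 3 → K)

/-- Three points of `PG(2,K)` are collinear iff the determinant of the matrix of
representatives vanishes. -/
def Col {K : Type*} [Field K] (p q r : PP K) : Prop :=
  Matrix.det (Matrix.of ![p.rep, q.rep, r.rep]) = 0

/-- The point `p` lies on the line with coordinate covector `u`. -/
def OnLine {K : Type*} [Field K] (u : Fin 3 → K) (p : PP K) : Prop :=
  u ⬝ᵥ p.rep = 0

private lemma det_cyc {K : Type*} [Field K] (a b c : Fin 3 → K) :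
    Matrix.det (Matrix.of ![c, a, b]) = Matrix.det (Matrix.of ![a, b, c]) := by
  simp [Matrix.det_fin_three]; ring

private lemma det_swap12 {K : Type*} [Field K] (a b c : Fin 3 → K) :
    Matrix.det (Matrix.of ![b, a, c]) = -Matrix.det (Matrix.of ![a, b, c]) := by
  simp [Matrix.det_fin_three]; ring

private lemma key {K : Type*} [Field K] (p q r : PP K) (hqr : q ≠ r)
    (hdet : Matrix.det (Matrix.of ![p.rep, q.rep, r.rep]) = 0)
    (u : Fin 3 → K) (hq : u ⬝ᵥ q.rep = 0) (hr : u ⬝ᵥ r.rep = 0) :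
    u ⬝ᵥ p.rep = 0 := by
  obtain ⟨v, hv0, hv⟩ := (Matrix.exists_vecMul_eq_zero_iff).2 hdet
  have hcomb : v 0 • p.rep + v 1 • q.rep + v 2 • r.rep = 0 := by
    funext j
    have := congrFun hv j
    simpa [Matrix.vecMul, dotProduct, Fin.sum_univ_three, mul_comm] using this
  have hdc : v 0 * (u ⬝ᵥ p.rep) + v 1 * (u ⬝ᵥ q.rep) + v 2 * (u ⬝ᵥ r.rep) = 0 := by
    have := congrArg (fun w => u ⬝ᵥ w) hcomb
    simpa [dotProduct_add, dotProduct_smul, smul_eq_mul] using this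
  rw [hq, hr] at hdc
  simp only [mul_zero, add_zero] at hdc
  by_cases h0 : v 0 = 0
  · exfalso
    rw [h0, zero_smul, zero_add] at hcomb
    by_cases h1 : v 1 = 0
    · rw [h1, zero_smul, zero_add] at hcomb
      have h2 : v 2 ≠ 0 := by
        intro h2; apply hv0; funext i; fin_cases i <;> assumption
      exact r.rep_nonzero (by simpa [smul_eq_zero, h2] using hcomb)
    · apply hqr
      have h2 : v 1 • q.rep = (-(v 2)) • r.rep := by
        linear_combination (norm := module) hcomb
      have this : q.rep = ((v 1)⁻¹ * (-(v 2))) • r.rep := by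
        rw [mul_smul, ← h2, smul_smul, inv_mul_cancel₀ h1, one_smul]
      have hne : ((v 1)⁻¹ * (-(v 2))) ≠ 0 := by
        intro h
        rw [h, zero_smul] at this
        exact q.rep_nonzero this
      calc q = Projectivization.mk K q.rep q.rep_nonzero := (Projectivization.mk_rep q).symm
        _ = Projectivization.mk K r.rep r.rep_nonzero := by
              rw [Projectivization.mk_eq_mk_iff]
              exact ⟨Units.mk0 _ hne, this.symm⟩
        _ = r := Projectivization.mk_rep r
  · rcases mul_eq_zero.1 hdc with h | h
    · exact absurd h h0
    · exact h

/-- For a line `ℓ` belonging to a dual multinet `(α₁,α₂,α₃)` labeled by a finite quasigroup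
`Q`, the sets `Sᵢ = {x : αᵢ x ∈ ℓ}` satisfy `S₁·S₂ ⊆ S₃`, `S₃/S₂ ⊆ S₁`, `S₁\S₃ ⊆ S₂`, and
all three have the same cardinality (the length of `ℓ`). -/
theorem dual_multinet_line_length {K : Type*} [Field K] {Q : Type*} [Fintype Q]
    (mul ldiv rdiv : Q → Q → Q)
    (hrd1 : ∀ x v, mul (rdiv x v) v = x)
    (hrd2 : ∀ x v, rdiv (mul x v) v = x)
    (hld1 : ∀ u y, mul u (ldiv u y) = y)
    (hld2 : ∀ u y, ldiv u (mul u y) = y)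
    (α₁ α₂ α₃ : Q → PP K)
    (hinj₁ : Function.Injective α₁) (hinj₂ : Function.Injective α₂)
    (hinj₃ : Function.Injective α₃)
    (hdisj₁₂ : Disjoint (Set.range α₁) (Set.range α₂))
    (hdisj₁₃ : Disjoint (Set.range α₁) (Set.range α₃))
    (hdisj₂₃ : Disjoint (Set.range α₂) (Set.range α₃))
    (hcol : ∀ x y : Q, Col (α₁ x) (α₂ y) (α₃ (mul x y)))
    (u : Fin 3 → K) (hu : u ≠ 0)
    (hmeet₁ : ∃ x, OnLine u (α₁ x)) (hmeet₂ : ∃ x, OnLine u (α₂ x))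
    (hmeet₃ : ∃ x, OnLine u (α₃ x)) :
    let S₁ : Set Q := {x | OnLine u (α₁ x)}
    let S₂ : Set Q := {x | OnLine u (α₂ x)}
    let S₃ : Set Q := {x | OnLine u (α₃ x)}
    (∀ x ∈ S₁, ∀ y ∈ S₂, mul x y ∈ S₃) ∧
      (∀ z ∈ S₃, ∀ y ∈ S₂, rdiv z y ∈ S₁) ∧
      (∀ x ∈ S₁, ∀ z ∈ S₃, ldiv x z ∈ S₂) ∧
      S₁.ncard = S₂.ncard ∧ S₂.ncard = S₃.ncard := by
  intro S₁ S₂ S₃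
  have hne₁₂ : ∀ x y : Q, α₁ x ≠ α₂ y := fun x y h =>
    Set.disjoint_left.mp hdisj₁₂ ⟨x, rfl⟩ ⟨y, h.symm⟩
  have hne₁₃ : ∀ x z : Q, α₁ x ≠ α₃ z := fun x z h =>
    Set.disjoint_left.mp hdisj₁₃ ⟨x, rfl⟩ ⟨z, h.symm⟩
  have hne₂₃ : ∀ y z : Q, α₂ y ≠ α₃ z := fun y z h =>
    Set.disjoint_left.mp hdisj₂₃ ⟨y, rfl⟩ ⟨z, h.symm⟩
  have part1 : ∀ x ∈ S₁, ∀ y ∈ S₂, mul x y ∈ S₃ := by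
    intro x hx y hy
    refine key (α₃ (mul x y)) (α₁ x) (α₂ y) (hne₁₂ x y) ?_ u hx hy
    rw [det_cyc]
    exact hcol x y
  have part2 : ∀ z ∈ S₃, ∀ y ∈ S₂, rdiv z y ∈ S₁ := by
    intro z hz y hy
    have h := hcol (rdiv z y) y
    rw [hrd1] at h
    exact key (α₁ (rdiv z y)) (α₂ y) (α₃ z) (hne₂₃ y z) h u hy hz
  have part3 : ∀ x ∈ S₁, ∀ z ∈ S₃, ldiv x z ∈ S₂ := by
    intro x hx z hz
    have h := hcol x (ldiv x z)
    rw [hld1] at h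
    refine key (α₂ (ldiv x z)) (α₁ x) (α₃ z) (hne₁₃ x z) ?_ u hx hz
    rw [det_swap12, h, neg_zero]
  refine ⟨part1, part2, part3, ?_, ?_⟩
  · obtain ⟨x₀, hx₀⟩ := hmeet₁
    obtain ⟨y₀, hy₀⟩ := hmeet₂
    have hinjf : Function.Injective (fun x => mul x y₀) := by
      intro a b h
      have : rdiv (mul a y₀) y₀ = rdiv (mul b y₀) y₀ := by simp only at h; rw [h]
      rwa [hrd2, hrd2] at this
    have hinjg : Function.Injective (fun y => mul x₀ y) := by
      intro a b h
      have : ldiv x₀ (mul x₀ a) = ldiv x₀ (mul x₀ b) := by simp only at h; rw [h]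
      rwa [hld2, hld2] at this
    have hS13 : S₃ = (fun x => mul x y₀) '' S₁ := by
      apply Set.Subset.antisymm
      · intro z hz
        exact ⟨rdiv z y₀, part2 z hz y₀ hy₀, hrd1 z y₀⟩
      · rintro _ ⟨x, hx, rfl⟩
        exact part1 x hx y₀ hy₀
    have hS23 : S₃ = (fun y => mul x₀ y) '' S₂ := by
      apply Set.Subset.antisymm
      · intro z hz
        exact ⟨ldiv x₀ z, part3 x₀ hx₀ z hz, hld1 x₀ z⟩
      · rintro _ ⟨y, hy, rfl⟩
        exact part1 x₀ hx₀ y hy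
    have h1 : S₁.ncard = S₃.ncard := by
      rw [hS13, Set.ncard_image_of_injective _ hinjf]
    have h2 : S₂.ncard = S₃.ncard := by
      rw [hS23, Set.ncard_image_of_injective _ hinjg]
    rw [h1, h2]
  · obtain ⟨x₀, hx₀⟩ := hmeet₁
    have hinjg : Function.Injective (fun y => mul x₀ y) := by
      intro a b h
      have : ldiv x₀ (mul x₀ a) = ldiv x₀ (mul x₀ b) := by simp only at h; rw [h]
      rwa [hld2, hld2] at this
    have hS23 : S₃ = (fun y => mul x₀ y) '' S₂ := by
      apply Set.Subset.antisymm
      · intro z hz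
        exact ⟨ldiv x₀ z, part3 x₀ hx₀ z hz, hld1 x₀ z⟩
      · rintro _ ⟨y, hy, rfl⟩
        exact part1 x₀ hx₀ y hy
    rw [hS23, Set.ncard_image_of_injective _ hinjg]

end
end

section
/- Over an algebraically closed field of characteristic different from 2, there is no dual 3-net in PG(2,K) labeled by the elementary abelian group (Z/2Z)³. That is, there do not exist injective maps α₁, α₂, α₃ : (Z/2Z)³ → PG(2,K) with pairwise disjoint images such that α₁(x), α₂(y), α₃(z) are collinear if and only if x + y = z. -/
/-!
Every nonzero label `a` is an involution, so the net is symmetric in its three components and,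
writing `A`, `B`, `C` for representative vectors, `A x, B y, C (x + y)` and
`A (x + a), B (y + a), C (x + y)` are collinear. Desargues' theorem for the triangles
`A x, A (x + a), B (y + g)` and `B y, B (y + a), A (x + g)`, in perspective from `C (x + y)`, shows
that the lines `A x A (x + a)`, `B y B (y + a)` and `C (x + y + g) C (x + y + g + a)` are concurrent
for every `g ∉ {0, a}`. The diagonal points of the quadrangle `A x, A (x + a), B (y + a), B y` are
`C (x + y)`, `C (x + y + a)` and this point of concurrency; they are not collinear when `2 ≠ 0`.
Comparing the points of concurrency for `y = 0` and `y = g + g'` shows that the lines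
`C g C (g + a)` and `C g' C (g' + a)` coincide, so the seven points `C z`, `z ≠ 0`, are collinear,
and by symmetry so are the `A x` and the `B y`, `x, y ≠ 0`. In affine coordinates `s` and `t` on
the lines of `A` and `B`, the point `C z` imposes a relation `μ_z s x + ν_z t (x + z) = ρ_z`.
Eliminating between the relations of two labels gives `μ₂ ν₁ + μ₁ ν₂ = 0`, and these identities
for the three pairs of generators of `(ℤ/2ℤ)³` force `2 μ₁ μ₃ ν₂ = 0`.
-/

open Matrix

noncomputable section

open Submodule

section PlaneGeometry

variable {K : Type*} [Field K] {p q r s u v w : Fin 3 → K}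

def det3 (u v w : Fin 3 → K) : K := (Matrix.of ![u, v, w]).det

theorem det3_apply (u v w : Fin 3 → K) :
    det3 u v w = u 0 * v 1 * w 2 - u 0 * v 2 * w 1 - u 1 * v 0 * w 2
      + u 1 * v 2 * w 0 + u 2 * v 0 * w 1 - u 2 * v 1 * w 0 := by
  simp [det3, det_fin_three]

theorem det3_swap_left (u v w : Fin 3 → K) : det3 v u w = -det3 u v w := by
  simp only [det3_apply]; ring

theorem det3_swap_right (u v w : Fin 3 → K) : det3 u w v = -det3 u v w := by
  simp only [det3_apply]; ring

theorem det3_rotate (u v w : Fin 3 → K) : det3 v w u = det3 u v w := by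
  simp only [det3_apply]; ring

theorem det3_smul_left (u v w : Fin 3 → K) (a : K) : det3 (a • u) v w = a * det3 u v w := by
  simp only [det3_apply, Pi.smul_apply, smul_eq_mul]; ring

theorem det3_smul_add_smul_right (u v x y : Fin 3 → K) (a b : K) :
    det3 u v (a • x + b • y) = a * det3 u v x + b * det3 u v y := by
  simp only [det3_apply, Pi.add_apply, Pi.smul_apply, smul_eq_mul]; ring

theorem det3_smul_add_smul_smul_add_smul (e₁ e₂ X w : Fin 3 → K) (σ τ a b : K) :
    det3 (σ • (e₁ + a • X)) (τ • (e₂ + b • X)) w =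
      σ * τ * (det3 e₁ e₂ w + a * det3 X e₂ w + b * det3 e₁ X w) := by
  simp only [det3_apply, Pi.add_apply, Pi.smul_apply, smul_eq_mul]; ring

theorem det3_ne_zero_iff_linearIndependent :
    det3 u v w ≠ 0 ↔ LinearIndependent K ![u, v, w] := by
  rw [det3, ← isUnit_iff_ne_zero, ← Matrix.isUnit_iff_isUnit_det,
    ← Matrix.linearIndependent_rows_iff_isUnit]
  rfl

theorem det3_eq_zero_of_not_linearIndependent (h : ¬ LinearIndependent K ![u, v])
    (w : Fin 3 → K) : det3 u v w = 0 := by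
  by_contra hw
  refine h ?_
  convert (det3_ne_zero_iff_linearIndependent.1 hw).comp Fin.castSucc
    (Fin.castSucc_injective _) using 1
  funext i
  fin_cases i <;> rfl

theorem mem_span_pair_of_det3_eq_zero (h : det3 u v w = 0)
    (huv : LinearIndependent K ![u, v]) : w ∈ span K {u, v} := by
  have hdep : ¬ LinearIndependent K (Fin.cons w ![u, v]) := by
    rw [← det3_rotate, ← det3_rotate] at h
    exact fun hli ↦ det3_ne_zero_iff_linearIndependent.2 hli h
  rw [linearIndependent_finCons, range_cons_cons_empty] at hdep
  simpa [huv] using hdep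

theorem det3_eq_zero_of_mem_span_pair (hu : u ∈ span K {p, q}) (hv : v ∈ span K {p, q})
    (hw : w ∈ span K {p, q}) : det3 u v w = 0 := by
  obtain ⟨a, b, rfl⟩ := mem_span_pair.1 hu
  obtain ⟨c, d, rfl⟩ := mem_span_pair.1 hv
  obtain ⟨e, f, rfl⟩ := mem_span_pair.1 hw
  simp only [det3_apply, Pi.add_apply, Pi.smul_apply, smul_eq_mul]; ring

theorem notMem_span_pair_of_det3_ne_zero (h : det3 u v w ≠ 0) : w ∉ span K {u, v} :=
  fun hw ↦ h (det3_eq_zero_of_mem_span_pair (subset_span (by simp)) (subset_span (by simp)) hw)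

theorem linearIndependent_of_notMem_span_singleton (hu : u ≠ 0) (hv : v ∉ K ∙ u) :
    LinearIndependent K ![u, v] :=
  (LinearIndependent.pair_iff' hu).2 fun c hc ↦ hv (mem_span_singleton.2 ⟨c, hc⟩)

theorem span_pair_eq_of_linearIndependent (hp : p ∈ span K {u, v}) (hq : q ∈ span K {u, v})
    (hpq : LinearIndependent K ![p, q]) : span K {p, q} = span K {u, v} := by
  refine eq_of_le_of_finrank_le (span_le.2 (by simp [Set.insert_subset_iff, hp, hq])) ?_
  have h₁ := finrank_range_le_card (R := K) ![u, v]
  have h₂ := finrank_span_eq_card hpq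
  rw [range_cons_cons_empty] at h₁ h₂
  simp only [Set.finrank, Fintype.card_fin] at h₁ h₂
  omega

theorem exists_ne_zero_mem_span_pair_inf (huv : LinearIndependent K ![u, v])
    (hpq : LinearIndependent K ![p, q]) : ∃ w ≠ 0, w ∈ span K {u, v} ⊓ span K {p, q} := by
  have h₁ := finrank_span_eq_card huv
  have h₂ := finrank_span_eq_card hpq
  rw [range_cons_cons_empty] at h₁ h₂
  have hsum := finrank_sup_add_finrank_inf_eq (span K {u, v}) (span K {p, q})
  have hle := (span K {u, v} ⊔ span K {p, q}).finrank_le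
  simp only [Fintype.card_fin, Module.finrank_fin_fun] at h₁ h₂ hle
  obtain ⟨w, hw, hw0⟩ := exists_mem_ne_zero_of_ne_bot (p := span K {u, v} ⊓ span K {p, q})
    (fun hbot ↦ by rw [hbot, finrank_bot] at hsum; omega)
  exact ⟨w, hw0, hw⟩

theorem exists_smul_add_smul_eq (hw : w ∈ span K {u, v}) (hwv : w ∉ K ∙ v) :
    ∃ σ c : K, σ ≠ 0 ∧ σ • (u + c • v) = w := by
  obtain ⟨a, b, rfl⟩ := mem_span_pair.1 hw
  have ha : a ≠ 0 := by
    rintro rfl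
    exact hwv (by simpa using smul_mem _ b (mem_span_singleton_self v))
  exact ⟨a, b / a, ha, by rw [smul_add, smul_smul, mul_div_cancel₀ _ ha]⟩

theorem mem_span_singleton_of_mem_span_pair_inf (hv : det3 p q v ≠ 0)
    (hw : w ∈ span K {p, q} ⊓ span K {u, v}) :
    w ∈ K ∙ (det3 p q v • u - det3 p q u • v) := by
  obtain ⟨a, b, rfl⟩ := mem_span_pair.1 hw.2
  have hrel : a * det3 p q u + b * det3 p q v = 0 := by
    rw [← det3_smul_add_smul_right]
    exact det3_eq_zero_of_mem_span_pair (subset_span (by simp)) (subset_span (by simp)) hw.1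
  refine mem_span_singleton.2 ⟨a / det3 p q v, ?_⟩
  ext i
  simp only [Pi.smul_apply, Pi.sub_apply, Pi.add_apply, smul_eq_mul]
  field_simp
  linear_combination (-v i) * hrel

theorem desargues {o p₁ p₂ p₃ q₁ q₂ q₃ r₁₂ r₂₃ r₃₁ : Fin 3 → K}
    (hq₁ : q₁ ∈ span K {p₁, o}) (hq₂ : q₂ ∈ span K {p₂, o}) (hq₃ : q₃ ∈ span K {p₃, o})
    (h₁₂ : det3 p₁ p₂ q₂ ≠ 0) (h₂₃ : det3 p₂ p₃ q₃ ≠ 0) (h₃₁ : det3 p₃ p₁ q₁ ≠ 0)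
    (hr₁₂ : r₁₂ ∈ span K {p₁, p₂} ⊓ span K {q₁, q₂})
    (hr₂₃ : r₂₃ ∈ span K {p₂, p₃} ⊓ span K {q₂, q₃})
    (hr₃₁ : r₃₁ ∈ span K {p₃, p₁} ⊓ span K {q₃, q₁}) :
    det3 r₁₂ r₂₃ r₃₁ = 0 := by
  -- the intersection points depend on the `qᵢ` only through their `o`-coordinates `mᵢ`
  have o_coord : ∀ {x q : Fin 3 → K}, q ∈ span K {x, o} → ∃ m : K, ∀ y,
      det3 x y q = m * det3 x y o ∧ det3 y x q = m * det3 y x o := by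
    intro x q hq
    obtain ⟨l, m, rfl⟩ := mem_span_pair.1 hq
    exact ⟨m, fun y ↦ by constructor <;>
      (simp only [det3_apply, Pi.add_apply, Pi.smul_apply, smul_eq_mul]; ring)⟩
  obtain ⟨m₁, hm₁⟩ := o_coord hq₁
  obtain ⟨m₂, hm₂⟩ := o_coord hq₂
  obtain ⟨m₃, hm₃⟩ := o_coord hq₃
  obtain ⟨k₁₂, rfl⟩ := mem_span_singleton.1 (mem_span_singleton_of_mem_span_pair_inf h₁₂ hr₁₂)
  obtain ⟨k₂₃, rfl⟩ := mem_span_singleton.1 (mem_span_singleton_of_mem_span_pair_inf h₂₃ hr₂₃)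
  obtain ⟨k₃₁, rfl⟩ := mem_span_singleton.1 (mem_span_singleton_of_mem_span_pair_inf h₃₁ hr₃₁)
  rw [(hm₁ p₂).1, (hm₁ p₃).2, (hm₂ p₁).2, (hm₂ p₃).1, (hm₃ p₂).2, (hm₃ p₁).1]
  generalize det3 p₁ p₂ o = d₁₂, det3 p₂ p₃ o = d₂₃, det3 p₃ p₁ o = d₃₁
  simp only [det3_apply, Pi.sub_apply, Pi.smul_apply, smul_eq_mul]
  ring

theorem det3_ne_zero_of_diagonal_points (h2 : (2 : K) ≠ 0) {d₁ d₂ d₃ : Fin 3 → K}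
    (hpqr : det3 p q r ≠ 0) (hpqs : det3 p q s ≠ 0) (hprs : det3 p r s ≠ 0)
    (hqrs : det3 q r s ≠ 0)
    (hd₁ : d₁ ∈ span K {p, q} ⊓ span K {r, s}) (hd₂ : d₂ ∈ span K {p, r} ⊓ span K {q, s})
    (hd₃ : d₃ ∈ span K {p, s} ⊓ span K {q, r}) (hd₁0 : d₁ ≠ 0) (hd₂0 : d₂ ≠ 0)
    (hd₃0 : d₃ ≠ 0) : det3 d₁ d₂ d₃ ≠ 0 := by
  have hpsr : det3 p s r ≠ 0 := by rw [det3_swap_right]; exact neg_ne_zero.2 hprs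
  obtain ⟨k₁, rfl⟩ := mem_span_singleton.1 (mem_span_singleton_of_mem_span_pair_inf hpqs hd₁)
  obtain ⟨k₂, rfl⟩ := mem_span_singleton.1 (mem_span_singleton_of_mem_span_pair_inf hprs hd₂)
  obtain ⟨k₃, rfl⟩ := mem_span_singleton.1 (mem_span_singleton_of_mem_span_pair_inf hpsr hd₃)
  have hk₁ : k₁ ≠ 0 := by rintro rfl; exact hd₁0 (zero_smul _ _)
  have hk₂ : k₂ ≠ 0 := by rintro rfl; exact hd₂0 (zero_smul _ _)
  have hk₃ : k₃ ≠ 0 := by rintro rfl; exact hd₃0 (zero_smul _ _)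
  rw [det3_swap_right p q r, det3_swap_right p q s, det3_swap_right p r s]
  convert_to (-2 * k₁ * k₂ * k₃ * det3 p q r * det3 p q s * det3 p r s * det3 q r s ≠ 0)
    using 2
  · generalize det3 p q r = a, det3 p q s = b, det3 p r s = c
    simp only [det3_apply, Pi.sub_apply, Pi.smul_apply, smul_eq_mul]
    ring
  simp [h2, hk₁, hk₂, hk₃, hpqr, hpqs, hprs, hqrs]

end PlaneGeometry

section AffineRelation

variable {K : Type*} [Field K] {G : Type*} [AddCommGroup G]

/-- In affine coordinates `s` on the line of the `A x` and `t` on the line of the `B y`, the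
collinearity of `A x`, `B (x + z)` and `C z` reads `μ * s x + ν * t (x + z) = ρ`. -/
def AffineRelation (s t : G → K) (z : G) (μ ν ρ : K) : Prop :=
  ∀ x, x ≠ 0 → x + z ≠ 0 → μ * s x + ν * t (x + z) = ρ

theorem mul_add_mul_eq_zero_of_affineRelation [Module (ZMod 2) G] {s t : G → K}
    {z₁ z₂ y : G} {μ₁ ν₁ ρ₁ μ₂ ν₂ ρ₂ : K} (ht : Set.InjOn t {0}ᶜ)
    (h₁ : AffineRelation s t z₁ μ₁ ν₁ ρ₁) (h₂ : AffineRelation s t z₂ μ₂ ν₂ ρ₂)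
    (hz : z₁ + z₂ ≠ 0) (hy : y ≠ 0) (hy₁ : y + z₁ ≠ 0) (hy₂ : y + z₂ ≠ 0)
    (hy₁₂ : y + z₁ + z₂ ≠ 0) : μ₂ * ν₁ + μ₁ * ν₂ = 0 := by
  have cancel : ∀ u v : G, u + v + v = u := fun u v ↦ by
    rw [add_assoc, ZModModule.add_self, add_zero]
  have e₁ := h₁ (y + z₁) hy₁ (by rwa [cancel])
  have e₂ := h₂ (y + z₁) hy₁ hy₁₂
  have e₃ := h₁ (y + z₂) hy₂ (by rwa [add_right_comm])
  have e₄ := h₂ (y + z₂) hy₂ (by rwa [cancel])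
  rw [cancel] at e₁ e₄
  rw [add_right_comm] at e₃
  have hty : t y ≠ t (y + z₁ + z₂) := fun heq ↦
    hz (by simpa [add_assoc] using ht hy hy₁₂ heq)
  have : (μ₂ * ν₁ + μ₁ * ν₂) * (t y - t (y + z₁ + z₂)) = 0 := by
    linear_combination μ₂ * e₁ - μ₁ * e₂ - μ₂ * e₃ + μ₁ * e₄
  exact (mul_eq_zero.1 this).resolve_right (sub_ne_zero.2 hty)

end AffineRelation

section DualNet

variable {K : Type*} [Field K] {G : Type*} [AddCommGroup G] {A B C : G → Fin 3 → K}
  {x x' y z a g g' : G} {T : Fin 3 → K}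

/-- Representative vectors `A x`, `B y`, `C z` of a dual 3-net labelled by `G`. -/
def IsDualNet (A B C : G → Fin 3 → K) : Prop :=
  ∀ x y z, det3 (A x) (B y) (C z) = 0 ↔ x + y = z

namespace IsDualNet

theorem swap (h : IsDualNet A B C) : IsDualNet B A C := fun y x z ↦ by
  rw [det3_swap_left, neg_eq_zero, h, add_comm]

section Nontrivial

variable [Nontrivial G]

theorem linearIndependent (h : IsDualNet A B C) (x y : G) :
    LinearIndependent K ![A x, B y] := by
  by_contra hdep
  obtain ⟨z, hz⟩ := exists_ne (x + y)
  exact hz ((h x y z).1 (det3_eq_zero_of_not_linearIndependent hdep _)).symm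

theorem C_mem_span (h : IsDualNet A B C) (hxyz : x + y = z) : C z ∈ span K {A x, B y} :=
  mem_span_pair_of_det3_eq_zero ((h x y z).2 hxyz) (h.linearIndependent x y)

theorem linearIndependent_of_ne (h : IsDualNet A B C) (hne : x ≠ x') :
    LinearIndependent K ![A x, A x'] := by
  have hx0 : A x ≠ 0 := (h.linearIndependent x 0).ne_zero 0
  rw [LinearIndependent.pair_iff' hx0]
  intro c hc
  have hx : det3 (A x) (B 0) (C x) = 0 := (h x 0 x).2 (add_zero x)
  have hx' : det3 (A x') (B 0) (C x) = 0 := by rw [← hc, det3_smul_left, hx, mul_zero]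
  exact hne (by simpa using ((h x' 0 x).1 hx').symm)

theorem det3_ne_zero_of_ne (h : IsDualNet A B C) (hne : x ≠ x') (y : G) :
    det3 (A x) (A x') (B y) ≠ 0 := by
  intro h0
  have hB := mem_span_pair_of_det3_eq_zero h0 (h.linearIndependent_of_ne hne)
  have hAB : span K {A x, B y} ≤ span K {A x, A x'} :=
    span_le.2 (Set.insert_subset_iff.2 ⟨subset_span (by simp), by simpa using hB⟩)
  refine hne (add_right_cancel ((h x' y (x + y)).1 ?_)).symm
  exact det3_eq_zero_of_mem_span_pair (subset_span (by simp)) hB (hAB (h.C_mem_span rfl))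

theorem exists_smul_add_smul_eq_A (h : IsDualNet A B C) {z₀ z₁ : G} (hz : z₀ ≠ z₁)
    (hA : ∀ x ≠ 0, A x ∈ span K {A z₀, A z₁}) {X : Fin 3 → K} (hX0 : X ≠ 0)
    (hX : X ∈ span K {A z₀, A z₁} ⊓ span K {B z₀, B z₁}) (hx : x ≠ 0) :
    ∃ σ c : K, σ ≠ 0 ∧ σ • (A z₀ + c • X) = A x := by
  have hAX : ∀ x, A x ∉ K ∙ X := fun x hx ↦
    notMem_span_pair_of_det3_ne_zero (h.swap.det3_ne_zero_of_ne hz x)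
      ((span_singleton_le_iff_mem _ _).2 hX.2 hx)
  have hline : span K {A z₀, X} = span K {A z₀, A z₁} :=
    span_pair_eq_of_linearIndependent (subset_span (by simp)) hX.1
      (LinearIndependent.pair_symm_iff.1 (linearIndependent_of_notMem_span_singleton hX0 (hAX z₀)))
  exact exists_smul_add_smul_eq (hline ▸ hA x hx) (hAX x)

end Nontrivial

section ElementaryAbelian

variable [Module (ZMod 2) G]

theorem rotate (h : IsDualNet A B C) : IsDualNet B C A := fun y z x ↦ by
  rw [det3_rotate, h]
  constructor <;> rintro rfl
  · rw [add_left_comm, ZModModule.add_self, add_zero]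
  · rw [add_right_comm, ZModModule.add_self, zero_add]

theorem mem_span_C_of_mem_inf (h : IsDualNet A B C) (ha : a ≠ 0) (hg : g ≠ 0) (hga : g ≠ a)
    (hT : T ∈ span K {A x, A (x + a)} ⊓ span K {B y, B (y + a)}) (hz : x + y + g = z) :
    T ∈ span K {C z, C (z + a)} := by
  subst hz
  have : Nontrivial G := ⟨a, 0, ha⟩
  -- Desargues for the triangles `A x, A (x + a), B (y + g)` and `B y, B (y + a), A (x + g)`,
  -- in perspective from `C (x + y)`
  have hdes := desargues (o := C (x + y)) (p₁ := A x) (p₂ := A (x + a)) (p₃ := B (y + g))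
    (q₁ := B y) (q₂ := B (y + a)) (q₃ := A (x + g)) (r₁₂ := T) (r₂₃ := C (x + y + g + a))
    (r₃₁ := C (x + y + g))
    (by rw [Set.pair_comm]
        exact h.rotate.rotate.C_mem_span (by abel_nf; simp [two_zsmul, ZModModule.add_self]))
    (by rw [Set.pair_comm]
        exact h.rotate.rotate.C_mem_span (by abel_nf; simp [two_zsmul, ZModModule.add_self]))
    (h.rotate.C_mem_span (by abel_nf; simp [two_zsmul, ZModModule.add_self]))
    (h.det3_ne_zero_of_ne (by simpa using ha) _)
    (by rw [det3_swap_right]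
        exact neg_ne_zero.2 (h.det3_ne_zero_of_ne (by simpa using hga.symm) _))
    (by rw [det3_swap_right]
        exact neg_ne_zero.2 (h.swap.det3_ne_zero_of_ne (by simpa using hg) _))
    hT
    ⟨h.C_mem_span (by abel), by rw [Set.pair_comm]; exact h.C_mem_span (by abel)⟩
    ⟨by rw [Set.pair_comm]; exact h.C_mem_span (by abel), h.C_mem_span (by abel)⟩
  refine mem_span_pair_of_det3_eq_zero ?_
    (h.rotate.rotate.linearIndependent_of_ne (by simpa using ha))
  rw [det3_rotate, ← neg_eq_zero, ← det3_swap_right]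
  exact hdes

theorem notMem_span_C_of_mem_inf (h2 : (2 : K) ≠ 0) (h : IsDualNet A B C) (ha : a ≠ 0)
    (hT : T ∈ span K {A x, A (x + a)} ⊓ span K {B y, B (y + a)}) (hT0 : T ≠ 0)
    (hz : x + y = z) : T ∉ span K {C z, C (z + a)} := by
  subst hz
  have : Nontrivial G := ⟨a, 0, ha⟩
  have hxa : x ≠ x + a := by simpa using ha
  have hBBA : ∀ x', det3 (A x') (B (y + a)) (B y) ≠ 0 := fun x' ↦ by
    rw [← det3_rotate]; exact h.swap.det3_ne_zero_of_ne (by simpa using ha) x'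
  -- `T`, `C (x + y + a)` and `C (x + y)` are the diagonal points of the quadrangle
  -- `A x, A (x + a), B (y + a), B y`
  have hdiag := det3_ne_zero_of_diagonal_points h2
    (h.det3_ne_zero_of_ne hxa (y + a)) (h.det3_ne_zero_of_ne hxa y) (hBBA x) (hBBA (x + a))
    (d₁ := T) (d₂ := C (x + y + a)) (d₃ := C (x + y))
    ⟨hT.1, by rw [Set.pair_comm]; exact hT.2⟩
    ⟨h.C_mem_span (by abel), h.C_mem_span (by abel)⟩
    ⟨h.C_mem_span rfl, h.C_mem_span (by abel_nf; simp [two_zsmul, ZModModule.add_self])⟩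
    hT0 ((h.rotate.rotate.linearIndependent _ x).ne_zero 0)
    ((h.rotate.rotate.linearIndependent _ x).ne_zero 0)
  exact fun hTC ↦
    hdiag (det3_eq_zero_of_mem_span_pair hTC (subset_span (by simp)) (subset_span (by simp)))

theorem span_C_pair_eq (h2 : (2 : K) ≠ 0) (h : IsDualNet A B C) (ha : a ≠ 0) (hg : g ≠ 0)
    (hga : g ≠ a) (hg' : g' ≠ 0) (hg'a : g' ≠ a) (hgg' : g + g' ≠ 0) (hgg'a : g + g' ≠ a) :
    span K {C g, C (g + a)} = span K {C g', C (g' + a)} := by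
  have : Nontrivial G := ⟨a, 0, ha⟩
  have hA := h.linearIndependent_of_ne (x := 0) (x' := 0 + a) (by simpa using ha.symm)
  obtain ⟨T, hT0, hT⟩ := exists_ne_zero_mem_span_pair_inf hA
    (h.swap.linearIndependent_of_ne (x := 0) (x' := 0 + a) (by simpa using ha.symm))
  obtain ⟨T', hT'0, hT'⟩ := exists_ne_zero_mem_span_pair_inf hA
    (h.swap.linearIndependent_of_ne (x := g + g') (x' := g + g' + a) (by simpa using ha))
  -- both `T` and `T'` lie on the lines `C g C (g + a)` and `C g' C (g' + a)`; if the lines were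
  -- different, `T` would be a multiple of `T'` and so lie on the line `C 0 C a`
  have hTg := h.mem_span_C_of_mem_inf ha hg hga hT (z := g) (by abel)
  have hTg' := h.mem_span_C_of_mem_inf ha hg' hg'a hT (z := g') (by abel)
  have hT'g := h.mem_span_C_of_mem_inf ha hg' hg'a hT' (z := g)
    (by abel_nf; simp [two_zsmul, ZModModule.add_self])
  have hT'g' := h.mem_span_C_of_mem_inf ha hg hga hT' (z := g')
    (by abel_nf; simp [two_zsmul, ZModModule.add_self])
  have hT'C := h.mem_span_C_of_mem_inf ha hgg' hgg'a hT' (z := 0)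
    (by abel_nf; simp [two_zsmul, ZModModule.add_self])
  by_cases hTT' : LinearIndependent K ![T, T']
  · rw [← span_pair_eq_of_linearIndependent hTg hT'g hTT',
      span_pair_eq_of_linearIndependent hTg' hT'g' hTT']
  rw [LinearIndependent.pair_symm_iff, LinearIndependent.pair_iff' hT'0, not_forall_not] at hTT'
  obtain ⟨c, rfl⟩ := hTT'
  exact absurd (smul_mem _ c hT'C) (h.notMem_span_C_of_mem_inf h2 ha hT hT0 (add_zero 0))

theorem exists_affineRelation (h : IsDualNet A B C) {z₀ z₁ : G} (hz : z₀ ≠ z₁)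
    (hA : ∀ x ≠ 0, A x ∈ span K {A z₀, A z₁}) (hB : ∀ y ≠ 0, B y ∈ span K {B z₀, B z₁}) :
    ∃ s t : G → K, Set.InjOn t {0}ᶜ ∧
      ∀ z ≠ 0, ∃ μ ν ρ : K, μ ≠ 0 ∧ ν ≠ 0 ∧ AffineRelation s t z μ ν ρ := by
  have : Nontrivial G := ⟨z₀, z₁, hz⟩
  obtain ⟨X, hX0, hX⟩ := exists_ne_zero_mem_span_pair_inf (h.linearIndependent_of_ne hz)
    (h.swap.linearIndependent_of_ne hz)
  choose! σ s hσ hs using fun x (hx : x ≠ 0) ↦ h.exists_smul_add_smul_eq_A hz hA hX0 hX hx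
  choose! τ t hτ ht using fun y (hy : y ≠ 0) ↦
    h.swap.exists_smul_add_smul_eq_A hz hB hX0 (inf_comm (span K {A z₀, A z₁}) _ ▸ hX) hy
  refine ⟨s, t, fun y hy y' hy' hyy' ↦ ?_, fun z hz0 ↦ ?_⟩
  · by_contra hne
    have hy'0 : B y' ≠ 0 := (h.swap.linearIndependent y' 0).ne_zero 0
    refine (LinearIndependent.pair_iff' hy'0).1
      (h.swap.linearIndependent_of_ne (Ne.symm hne)) (τ y / τ y') ?_
    rw [← ht y hy, ← ht y' hy', hyy', smul_smul, div_mul_cancel₀ _ (hτ y' hy')]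
  have hXA : K ∙ X ≤ span K {A z₀, A z₁} := (span_singleton_le_iff_mem _ _).2 hX.1
  have hXB : K ∙ X ≤ span K {B z₀, B z₁} := (span_singleton_le_iff_mem _ _).2 hX.2
  refine ⟨det3 X (B z₀) (C z), det3 (A z₀) X (C z), -det3 (A z₀) (B z₀) (C z), fun h0 ↦ ?_,
    fun h0 ↦ ?_, fun x hx hxz ↦ ?_⟩
  · have hli := linearIndependent_of_notMem_span_singleton hX0 fun hB₀ ↦
      notMem_span_pair_of_det3_ne_zero (h.det3_ne_zero_of_ne hz z₀) (hXA hB₀)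
    refine notMem_span_pair_of_det3_ne_zero (h.rotate.det3_ne_zero_of_ne hz z)
      (span_le.2 ?_ (mem_span_pair_of_det3_eq_zero h0 hli))
    simpa [Set.insert_subset_iff, hX.2] using subset_span (by simp)
  · have hli := linearIndependent_of_notMem_span_singleton hX0 fun hA₀ ↦
      notMem_span_pair_of_det3_ne_zero (h.swap.det3_ne_zero_of_ne hz z₀) (hXB hA₀)
    refine notMem_span_pair_of_det3_ne_zero (h.rotate.rotate.swap.det3_ne_zero_of_ne hz z)
      (span_le.2 ?_ (mem_span_pair_of_det3_eq_zero h0 (LinearIndependent.pair_symm_iff.1 hli)))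
    simpa [Set.insert_subset_iff, hX.1] using subset_span (by simp)
  · have h0 := (h x (x + z) z).2 (by rw [← add_assoc, ZModModule.add_self, zero_add])
    rw [← hs x hx, ← ht _ hxz, det3_smul_add_smul_smul_add_smul] at h0
    linear_combination (mul_eq_zero.1 h0).resolve_left (mul_ne_zero (hσ x hx) (hτ _ hxz))

end ElementaryAbelian

end IsDualNet

end DualNet

section ElementaryAbelianEight

variable {K : Type*} [Field K]

theorem IsDualNet.C_mem_span_of_ne_zero {A B C : ZMod 2 × ZMod 2 × ZMod 2 → Fin 3 → K}
    (h2 : (2 : K) ≠ 0) (h : IsDualNet A B C) {z : ZMod 2 × ZMod 2 × ZMod 2} (hz : z ≠ 0) :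
    C z ∈ span K {C (0, 0, 1), C (1, 0, 1)} := by
  have e₁ : span K {C (0, 1, 0), C (1, 1, 0)} = span K {C (0, 0, 1), C (1, 0, 1)} :=
    h.span_C_pair_eq h2 (a := (1, 0, 0)) (by decide) (by decide) (by decide) (by decide)
      (by decide) (by decide) (by decide)
  have e₂ : span K {C (0, 1, 1), C (1, 1, 1)} = span K {C (0, 0, 1), C (1, 0, 1)} :=
    h.span_C_pair_eq h2 (a := (1, 0, 0)) (by decide) (by decide) (by decide) (by decide)
      (by decide) (by decide) (by decide)
  have e₃ : span K {C (1, 0, 0), C (1, 1, 0)} = span K {C (0, 0, 1), C (0, 1, 1)} :=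
    h.span_C_pair_eq h2 (a := (0, 1, 0)) (by decide) (by decide) (by decide) (by decide)
      (by decide) (by decide) (by decide)
  have e₄ : span K {C (0, 0, 1), C (0, 1, 1)} = span K {C (0, 0, 1), C (1, 0, 1)} :=
    span_pair_eq_of_linearIndependent (subset_span (by simp)) (e₂ ▸ subset_span (by simp))
      (h.rotate.rotate.linearIndependent_of_ne (by decide))
  have hcases : ∀ z : ZMod 2 × ZMod 2 × ZMod 2, z ≠ 0 → z = (0, 0, 1) ∨ z = (1, 0, 1) ∨
      z = (0, 1, 0) ∨ z = (1, 1, 0) ∨ z = (0, 1, 1) ∨ z = (1, 1, 1) ∨ z = (1, 0, 0) := by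
    decide
  rcases hcases z hz with rfl | rfl | rfl | rfl | rfl | rfl | rfl
  · exact subset_span (by simp)
  · exact subset_span (by simp)
  · exact e₁ ▸ subset_span (by simp)
  · exact e₁ ▸ subset_span (by simp)
  · exact e₂ ▸ subset_span (by simp)
  · exact e₂ ▸ subset_span (by simp)
  · exact e₄ ▸ e₃ ▸ subset_span (by simp)

theorem false_of_affineRelation (h2 : (2 : K) ≠ 0) {s t : ZMod 2 × ZMod 2 × ZMod 2 → K}
    (ht : Set.InjOn t {0}ᶜ)
    (hrel : ∀ z ≠ 0, ∃ μ ν ρ : K, μ ≠ 0 ∧ ν ≠ 0 ∧ AffineRelation s t z μ ν ρ) : False := by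
  obtain ⟨μ₁, ν₁, ρ₁, hμ₁, -, h₁⟩ := hrel (1, 0, 0) (by decide)
  obtain ⟨μ₂, ν₂, ρ₂, -, hν₂, h₂⟩ := hrel (0, 1, 0) (by decide)
  obtain ⟨μ₃, ν₃, ρ₃, hμ₃, -, h₃⟩ := hrel (0, 0, 1) (by decide)
  have r₁₂ := mul_add_mul_eq_zero_of_affineRelation (y := (0, 0, 1)) ht h₁ h₂
    (by decide) (by decide) (by decide) (by decide) (by decide)
  have r₁₃ := mul_add_mul_eq_zero_of_affineRelation (y := (0, 1, 0)) ht h₁ h₃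
    (by decide) (by decide) (by decide) (by decide) (by decide)
  have r₂₃ := mul_add_mul_eq_zero_of_affineRelation (y := (1, 0, 0)) ht h₂ h₃
    (by decide) (by decide) (by decide) (by decide) (by decide)
  have : 2 * μ₁ * μ₃ * ν₂ = 0 := by linear_combination μ₃ * r₁₂ - μ₂ * r₁₃ + μ₁ * r₂₃
  simp [h2, hμ₁, hμ₃, hν₂] at this

theorem not_isDualNet (h2 : (2 : K) ≠ 0) (A B C : ZMod 2 × ZMod 2 × ZMod 2 → Fin 3 → K) :
    ¬ IsDualNet A B C := fun h ↦ by
  obtain ⟨s, t, ht, hrel⟩ := h.exists_affineRelation (by decide)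
    (fun _ ↦ h.rotate.C_mem_span_of_ne_zero h2) (fun _ ↦ h.rotate.rotate.C_mem_span_of_ne_zero h2)
  exact false_of_affineRelation h2 ht hrel

end ElementaryAbelianEight

theorem no_dual_3net_elementary_abelian_eight_general {K : Type*} [Field K]
    (hchar : ringChar K ≠ 2) :
    ¬ ∃ α₁ α₂ α₃ : (ZMod 2 × ZMod 2 × ZMod 2) → PP K,
        Function.Injective α₁ ∧ Function.Injective α₂ ∧ Function.Injective α₃ ∧
        Disjoint (Set.range α₁) (Set.range α₂) ∧
        Disjoint (Set.range α₁) (Set.range α₃) ∧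
        Disjoint (Set.range α₂) (Set.range α₃) ∧
        ∀ x y z : ZMod 2 × ZMod 2 × ZMod 2,
          Col (α₁ x) (α₂ y) (α₃ z) ↔ x + y = z := by
  rintro ⟨α₁, α₂, α₃, -, -, -, -, -, -, hcol⟩
  exact not_isDualNet (Ring.two_ne_zero hchar) _ _ _ hcol

/-- Over an algebraically closed field of characteristic `≠ 2`, there is no dual 3-net in
`PG(2,K)` labeled by the elementary abelian group `(ℤ/2ℤ)³`. -/
theorem no_dual_3net_elementary_abelian_eight {K : Type*} [Field K] [IsAlgClosed K]
    (hchar : ringChar K ≠ 2) :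
    ¬ ∃ α₁ α₂ α₃ : (ZMod 2 × ZMod 2 × ZMod 2) → PP K,
        Function.Injective α₁ ∧ Function.Injective α₂ ∧ Function.Injective α₃ ∧
        Disjoint (Set.range α₁) (Set.range α₂) ∧
        Disjoint (Set.range α₁) (Set.range α₃) ∧
        Disjoint (Set.range α₂) (Set.range α₃) ∧
        ∀ x y z : ZMod 2 × ZMod 2 × ZMod 2,
          Col (α₁ x) (α₂ y) (α₃ z) ↔ x + y = z :=
  no_dual_3net_elementary_abelian_eight_general hchar

end
end

section
/- Let G be a finite group of order n and Λ = (α₁,α₂,α₃) a light dual multinet labeled by G in PG(2,K). Suppose a line ℓ belongs to Λ with ℓ ∩ αᵢ(G) = αᵢ(H) for a subgroup H of G, i = 1,2,3. If for some g ∈ G the three points α₁(g), α₂(g), α₃(g) are contained in a common line m, then α₁(1), α₂(1) ∈ m, m = ℓ, and g ∈ H. -/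
/-!
Collinearity of `α₁(g), α₂(1), α₃(g)` and of `α₁(1), α₂(g), α₃(g)` (the multinet condition at
`(g, 1)` and `(1, g)`) puts `α₁(1)` and `α₂(1)` on `m`, since `α₃(g)` differs from `α₁(g)` and
`α₂(g)`. These two distinct points also lie on `ℓ`, because `1 ∈ H`, so `m = ℓ`; then
`α₁(g) ∈ ℓ` gives `g ∈ H`.
-/

open Matrix

noncomputable section

section Collinearity

variable {K : Type*} [Field K]

theorem col_iff_exists_onLine {p q r : PP K} :
    Col p q r ↔ ∃ w ≠ 0, OnLine w p ∧ OnLine w q ∧ OnLine w r := by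
  rw [Col, ← Matrix.exists_mulVec_eq_zero_iff]
  refine exists_congr fun w => and_congr_right fun _ => ?_
  simp only [OnLine, funext_iff, Fin.forall_fin_succ]
  simp [Matrix.mulVec, dotProduct_comm w]

theorem rep_mem_span_of_col {p q r : PP K} (hpq : p ≠ q) (h : Col r p q) :
    r.rep ∈ Submodule.span K {p.rep, q.rep} := by
  have hdep : ¬LinearIndependent K ![r.rep, p.rep, q.rep] := by
    change ¬LinearIndependent K (Matrix.of ![r.rep, p.rep, q.rep]).row
    rw [Matrix.linearIndependent_rows_iff_isUnit, Matrix.isUnit_iff_isUnit_det,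
      isUnit_iff_ne_zero, not_not]
    exact h
  rw [Matrix.vecCons, linearIndependent_finCons] at hdep
  simpa [Matrix.range_cons, Projectivization.linearIndependent_pair_iff_ne.mpr hpq,
    Set.pair_comm] using hdep

theorem onLine_of_col {p q r : PP K} (hpq : p ≠ q) {v : Fin 3 → K} (hp : OnLine v p)
    (hq : OnLine v q) (h : Col r p q) : OnLine v r := by
  have hle : Submodule.span K {p.rep, q.rep} ≤ LinearMap.ker (dotProductBilin K K v) :=
    Submodule.span_le.mpr (Set.insert_subset_iff.mpr ⟨hp, Set.singleton_subset_iff.mpr hq⟩)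
  exact hle (rep_mem_span_of_col hpq h)

theorem onLine_iff_onLine_of_ne {p q : PP K} (hpq : p ≠ q) {u v : Fin 3 → K} (hu : u ≠ 0)
    (hv : v ≠ 0) (hup : OnLine u p) (huq : OnLine u q) (hvp : OnLine v p) (hvq : OnLine v q)
    (r : PP K) : OnLine u r ↔ OnLine v r :=
  ⟨fun hur => onLine_of_col hpq hvp hvq (col_iff_exists_onLine.mpr ⟨u, hu, hur, hup, huq⟩),
    fun hvr => onLine_of_col hpq hup huq (col_iff_exists_onLine.mpr ⟨v, hv, hvr, hvp, hvq⟩)⟩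

end Collinearity

theorem same_label_collinear_forces_line_general {K : Type*} [Field K]
    {G : Type*} [Group G]
    (α₁ α₂ α₃ : G → PP K)
    (hdisj₁₂ : Disjoint (Set.range α₁) (Set.range α₂))
    (hdisj₁₃ : Disjoint (Set.range α₁) (Set.range α₃))
    (hdisj₂₃ : Disjoint (Set.range α₂) (Set.range α₃))
    (hcol : ∀ x y : G, Col (α₁ x) (α₂ y) (α₃ (x * y)))
    (u : Fin 3 → K) (hu : u ≠ 0) (H : Subgroup G)
    (hH₁ : ∀ x : G, OnLine u (α₁ x) ↔ x ∈ H)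
    (hH₂ : ∀ x : G, OnLine u (α₂ x) ↔ x ∈ H)
    (g : G) (v : Fin 3 → K) (hv : v ≠ 0)
    (hm₁ : OnLine v (α₁ g)) (hm₂ : OnLine v (α₂ g)) (hm₃ : OnLine v (α₃ g)) :
    OnLine v (α₁ 1) ∧ OnLine v (α₂ 1) ∧
      (∀ p : PP K, OnLine v p ↔ OnLine u p) ∧ g ∈ H := by
  have hv₂ : OnLine v (α₂ 1) := by
    obtain ⟨w, hw, hw₁, hw₂, hw₃⟩ := col_iff_exists_onLine.mp (mul_one g ▸ hcol g 1)
    exact (onLine_iff_onLine_of_ne (Set.disjoint_range_iff.mp hdisj₁₃ g g) hw hv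
      hw₁ hw₃ hm₁ hm₃ _).mp hw₂
  have hv₁ : OnLine v (α₁ 1) := by
    obtain ⟨w, hw, hw₁, hw₂, hw₃⟩ := col_iff_exists_onLine.mp (one_mul g ▸ hcol 1 g)
    exact (onLine_iff_onLine_of_ne (Set.disjoint_range_iff.mp hdisj₂₃ g g) hw hv
      hw₂ hw₃ hm₂ hm₃ _).mp hw₁
  have hm : ∀ p : PP K, OnLine v p ↔ OnLine u p :=
    onLine_iff_onLine_of_ne (Set.disjoint_range_iff.mp hdisj₁₂ 1 1) hv hu hv₁ hv₂
      ((hH₁ 1).mpr H.one_mem) ((hH₂ 1).mpr H.one_mem)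
  exact ⟨hv₁, hv₂, hm, (hH₁ g).mp ((hm _).mp hm₁)⟩

/-- For a `G`-labeled light dual multinet with line `ℓ` satisfying `ℓ ∩ αᵢ(G) = αᵢ(H)`:
if `α₁(g), α₂(g), α₃(g)` lie on a common line `m`, then `α₁(1), α₂(1) ∈ m`, `m = ℓ`,
and `g ∈ H`. -/
theorem same_label_collinear_forces_line {K : Type*} [Field K]
    {G : Type*} [Group G] [Finite G]
    (α₁ α₂ α₃ : G → PP K)
    (hinj₁ : Function.Injective α₁) (hinj₂ : Function.Injective α₂)
    (hinj₃ : Function.Injective α₃)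
    (hdisj₁₂ : Disjoint (Set.range α₁) (Set.range α₂))
    (hdisj₁₃ : Disjoint (Set.range α₁) (Set.range α₃))
    (hdisj₂₃ : Disjoint (Set.range α₂) (Set.range α₃))
    (hcol : ∀ x y : G, Col (α₁ x) (α₂ y) (α₃ (x * y)))
    (u : Fin 3 → K) (hu : u ≠ 0) (H : Subgroup G)
    (hH₁ : ∀ x : G, OnLine u (α₁ x) ↔ x ∈ H)
    (hH₂ : ∀ x : G, OnLine u (α₂ x) ↔ x ∈ H)
    (hH₃ : ∀ x : G, OnLine u (α₃ x) ↔ x ∈ H)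
    (g : G) (v : Fin 3 → K) (hv : v ≠ 0)
    (hm₁ : OnLine v (α₁ g)) (hm₂ : OnLine v (α₂ g)) (hm₃ : OnLine v (α₃ g)) :
    OnLine v (α₁ 1) ∧ OnLine v (α₂ 1) ∧
      (∀ p : PP K, OnLine v p ↔ OnLine u p) ∧ g ∈ H :=
  same_label_collinear_forces_line_general α₁ α₂ α₃ hdisj₁₂ hdisj₁₃ hdisj₂₃ hcol u hu H hH₁ hH₂ g v
    hv hm₁ hm₂ hm₃

end
end

section
/- Define the cyclic group G = ⟨ξ⟩ of order 3m (ξ a primitive 3m-th root of unity in a field K), H = ⟨ξ³⟩, and the maps α₁, α₂, α₃ : G → PG(2,K) by: α₁(x) = f₁(x), α₁(xξ) = f₂(xξ⁻¹), α₁(xξ²) = f₃(x⁻¹ξ²); α₂(y) = f₁(yξ), α₂(yξ) = f₂(y), α₂(yξ²) = f₃(y⁻¹ξ); α₃(z) = f₁(z⁻¹ξ⁵), α₃(zξ) = f₃(z), α₃(zξ²) = f₂(z⁻¹ξ) for x,y,z ∈ H, where f₁(u) = (0,1,u), f₂(u) = (u,0,1), f₃(u) = (u,−1,0). Then for all g,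 g' ∈ G, the points α₁(g), α₂(g'), α₃(gg') are collinear; i.e., (α₁,α₂,α₃) is a dual multinet labeled by G. -/
/-!
The points `f₁(x) = (0,1,x)`, `f₂(y) = (y,0,1)`, `f₃(z) = (z,-1,0)` lie on the three sides
`X = 0`, `Y = 0`, `Z = 0` of the coordinate triangle, and the determinant of the rows
`f₁(x), f₂(y), f₃(z)` is `z - xy`. When `α₁(g), α₂(g'), α₃(gg')` come from the same `fᵢ` they lie
on one side and are trivially collinear; in the six other coset cases the rows are a permutation
of `f₁(ξᵃ), f₂(ξᵇ), f₃(ξᶜ)` and the exponents satisfy `a + b = c`.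
-/

open Matrix

section SidesOfTriangle

variable {R : Type*} [CommRing R]

theorem det_of_rows_swap (p q r : Fin 3 → R) :
    det (of ![q, p, r]) = -det (of ![p, q, r]) := by
  simp only [det_fin_three, of_apply, cons_val', cons_val_fin_one, cons_val_zero, cons_val_one,
    cons_val, neg_sub]
  ring

theorem det_of_rows_rotate (p q r : Fin 3 → R) :
    det (of ![q, r, p]) = det (of ![p, q, r]) := by
  simp only [det_fin_three, of_apply, cons_val', cons_val_fin_one, cons_val_zero, cons_val_one,
    cons_val]
  ring

theorem det_sides (x y z : R) :
    det (of ![![0, 1, x], ![y, 0, 1], ![z, -1, 0]]) = z - x * y := by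
  simp [det_fin_three, sub_eq_add_neg]

theorem det_sides_zpow_eq_zero (ξ : Rˣ) {a b c : ℤ} (h : a + b = c) :
    det (of ![![0, 1, ((ξ ^ a : Rˣ) : R)], ![((ξ ^ b : Rˣ) : R), 0, 1],
      ![((ξ ^ c : Rˣ) : R), -1, 0]]) = 0 := by
  rw [det_sides, ← Units.val_mul, ← _root_.zpow_add, h, sub_self]

end SidesOfTriangle

theorem triangle_light_dual_multinet_general {K : Type*} [Field K]
    (ξ : Kˣ) :
    let f₁ : Kˣ → Fin 3 → K := fun u => ![0, 1, (u : K)]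
    let f₂ : Kˣ → Fin 3 → K := fun u => ![(u : K), 0, 1]
    let f₃ : Kˣ → Fin 3 → K := fun u => ![(u : K), -1, 0]
    let A₁ : ℤ → Fin 3 → K := fun j =>
      if j % 3 = 0 then f₁ (ξ ^ j)
      else if j % 3 = 1 then f₂ (ξ ^ (j - 2))
      else f₃ (ξ ^ (4 - j))
    let A₂ : ℤ → Fin 3 → K := fun j =>
      if j % 3 = 0 then f₁ (ξ ^ (j + 1))
      else if j % 3 = 1 then f₂ (ξ ^ (j - 1))
      else f₃ (ξ ^ (3 - j))
    let A₃ : ℤ → Fin 3 → K := fun j =>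
      if j % 3 = 0 then f₁ (ξ ^ (5 - j))
      else if j % 3 = 1 then f₃ (ξ ^ (j - 1))
      else f₂ (ξ ^ (3 - j))
    ∀ j j' : ℤ, Matrix.det (Matrix.of ![A₁ j, A₂ j', A₃ (j + j')]) = 0 := by
  intro f₁ f₂ f₃ A₁ A₂ A₃ j j'
  have hsum : (j + j') % 3 = (j % 3 + j' % 3) % 3 := Int.add_emod j j' 3
  rcases (by omega : j % 3 = 0 ∨ j % 3 = 1 ∨ j % 3 = 2) with h | h | h <;>
    rcases (by omega : j' % 3 = 0 ∨ j' % 3 = 1 ∨ j' % 3 = 2) with h' | h' | h' <;>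
    simp only [A₁, A₂, A₃, hsum, h, h', Int.reduceAdd, Int.reduceMod, Int.reduceEq,
      if_true, if_false]
  · exact det_eq_zero_of_column_eq_zero 0 fun i => by fin_cases i <;> rfl
  · exact det_sides_zpow_eq_zero ξ (by ring)
  · rw [det_of_rows_swap, neg_eq_zero, ← det_of_rows_rotate]
    exact det_sides_zpow_eq_zero ξ (by ring)
  · rw [det_of_rows_swap, neg_eq_zero]
    exact det_sides_zpow_eq_zero ξ (by ring)
  · exact det_eq_zero_of_column_eq_zero 1 fun i => by fin_cases i <;> rfl
  · rw [det_of_rows_rotate]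
    exact det_sides_zpow_eq_zero ξ (by ring)
  · rw [← det_of_rows_rotate]
    exact det_sides_zpow_eq_zero ξ (by ring)
  · rw [det_of_rows_swap, neg_eq_zero, det_of_rows_rotate]
    exact det_sides_zpow_eq_zero ξ (by ring)
  · exact det_eq_zero_of_column_eq_zero 2 fun i => by fin_cases i <;> rfl

/-- The triangle-type light dual multinet of order `3m`: with `ξ` a primitive `3m`-th root
of unity, `f₁(u) = (0,1,u)`, `f₂(u) = (u,0,1)`, `f₃(u) = (u,-1,0)`, and the maps
`α₁, α₂, α₃` on `G = ⟨ξ⟩` defined casewise on the cosets of `H = ⟨ξ³⟩` (elements written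
as `ξ^j`, the case depending on `j mod 3`), the points `α₁(g), α₂(g'), α₃(gg')` are
collinear for all `g, g' ∈ G`. -/
theorem triangle_light_dual_multinet {K : Type*} [Field K] (m : ℕ) (hm : 0 < m)
    (ξ : Kˣ) (hξ : orderOf ξ = 3 * m) :
    let f₁ : Kˣ → Fin 3 → K := fun u => ![0, 1, (u : K)]
    let f₂ : Kˣ → Fin 3 → K := fun u => ![(u : K), 0, 1]
    let f₃ : Kˣ → Fin 3 → K := fun u => ![(u : K), -1, 0]
    let A₁ : ℤ → Fin 3 → K := fun j =>
      if j % 3 = 0 then f₁ (ξ ^ j)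
      else if j % 3 = 1 then f₂ (ξ ^ (j - 2))
      else f₃ (ξ ^ (4 - j))
    let A₂ : ℤ → Fin 3 → K := fun j =>
      if j % 3 = 0 then f₁ (ξ ^ (j + 1))
      else if j % 3 = 1 then f₂ (ξ ^ (j - 1))
      else f₃ (ξ ^ (3 - j))
    let A₃ : ℤ → Fin 3 → K := fun j =>
      if j % 3 = 0 then f₁ (ξ ^ (5 - j))
      else if j % 3 = 1 then f₃ (ξ ^ (j - 1))
      else f₂ (ξ ^ (3 - j))
    ∀ j j' : ℤ, Matrix.det (Matrix.of ![A₁ j, A₂ j', A₃ (j + j')]) = 0 :=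
  triangle_light_dual_multinet_general ξ
end

section
/- Let H be a finite cyclic group of order m generated by h, let k ∈ ℤ, and consider the abelian group A = H ∪ H' of order 2m with multiplication x*y = xy, x'*y = x*y' = (xy)', x'*y' = xy·h^k (primes denoting the second copy). Embed A into PG(2,K) by α₁(x) = f₁(x), α₁(x') = f₂(x⁻¹); α₂(y) = f₁(yξ), α₂(y') = f₂(y⁻¹ξ⁻¹); α₃(z) = f₁(z⁻¹ξ^{3k−1}), α₃(z') = f₂(zξ), where H is realized as ⟨ξ³⟩ inside K* with ξ a primitive 3m-th root of unity, f₁(u) = (u,−1,0), f₂(u) = (u,u⁻¹,1). Then for all a, b ∈ A, the points α₁(a), α₂(b), α₃(a*b) are collinear. -/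
/-!
Writing `f₁(u) = (u, -1, 0)` and `f₂(u) = (u, u⁻¹, 1)`, the determinant of `f₂(x), f₂(y), f₁(z)`
is `(x - y)(xy - z)/(xy)`, so these points are collinear as soon as `xy = z`, while any three
points `f₁(u)` lie on the line `X₃ = 0`. In each of the four cases `a, b ∈ H` or `H'` the
exponents of `ξ` are chosen exactly so that the product condition `xy = z` holds.
-/

section ConicLine

variable {K : Type*} [Field K]

def linePoint (u : Kˣ) : Fin 3 → K := ![(u : K), -1, 0]

def conicPoint (u : Kˣ) : Fin 3 → K := ![(u : K), ((u⁻¹ : Kˣ) : K), 1]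

theorem det_of_vec3_rotate (p q r : Fin 3 → K) :
    (Matrix.of ![q, r, p]).det = (Matrix.of ![p, q, r]).det := by
  simp only [Matrix.det_fin_three, Matrix.of_apply, Matrix.cons_val_zero, Matrix.cons_val_one,
    Matrix.cons_val_two, Matrix.head_cons, Matrix.tail_cons]
  ring

theorem det_linePoint (u v w : Kˣ) :
    (Matrix.of ![linePoint u, linePoint v, linePoint w]).det = 0 :=
  Matrix.det_eq_zero_of_column_eq_zero 2 fun i => by fin_cases i <;> rfl

theorem det_conicPoint_conicPoint_linePoint (x y z : Kˣ) :
    (Matrix.of ![conicPoint x, conicPoint y, linePoint z]).det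
      = (x - y) * (x * y - z) / (x * y) := by
  simp only [Matrix.det_fin_three, conicPoint, linePoint, Matrix.of_apply, Matrix.cons_val_zero,
    Matrix.cons_val_one, Matrix.cons_val_two, Matrix.head_cons, Matrix.tail_cons,
    Units.val_inv_eq_inv_val]
  field_simp
  ring

theorem det_conicPoint_conicPoint_linePoint_of_mul_eq {x y z : Kˣ} (h : x * y = z) :
    (Matrix.of ![conicPoint x, conicPoint y, linePoint z]).det = 0 := by
  rw [det_conicPoint_conicPoint_linePoint, ← h, Units.val_mul, sub_self, mul_zero, zero_div]

end ConicLine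

theorem conic_line_light_dual_multinet_general {K : Type*} [Field K]
    (ξ : Kˣ) (k : ℤ) :
    let f₁ : Kˣ → Fin 3 → K := fun u => ![(u : K), -1, 0]
    let f₂ : Kˣ → Fin 3 → K := fun u => ![(u : K), ((u⁻¹ : Kˣ) : K), 1]
    let α₁ : ℤ × Bool → Fin 3 → K := fun a =>
      if a.2 then f₂ (ξ ^ (-3 * a.1)) else f₁ (ξ ^ (3 * a.1))
    let α₂ : ℤ × Bool → Fin 3 → K := fun a =>
      if a.2 then f₂ (ξ ^ (-3 * a.1 - 1)) else f₁ (ξ ^ (3 * a.1 + 1))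
    let α₃ : ℤ × Bool → Fin 3 → K := fun a =>
      if a.2 then f₂ (ξ ^ (3 * a.1 + 1)) else f₁ (ξ ^ (-3 * a.1 + 3 * k - 1))
    let mul : ℤ × Bool → ℤ × Bool → ℤ × Bool :=
      fun a b => (a.1 + b.1 + if a.2 && b.2 then k else 0, xor a.2 b.2)
    ∀ a b : ℤ × Bool, Matrix.det (Matrix.of ![α₁ a, α₂ b, α₃ (mul a b)]) = 0 := by
  intro f₁ f₂ α₁ α₂ α₃ mul a b
  have zpow_add_eq {e₁ e₂ e : ℤ} (h : e₁ + e₂ = e) : ξ ^ e₁ * ξ ^ e₂ = ξ ^ e := by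
    rw [← zpow_add, h]
  rcases a with ⟨i, _ | _⟩ <;> rcases b with ⟨j, _ | _⟩
  · exact det_linePoint _ _ _
  · show (Matrix.of ![linePoint (ξ ^ (3 * i)), conicPoint (ξ ^ (-3 * j - 1)),
      conicPoint (ξ ^ (3 * (i + j + 0) + 1))]).det = 0
    rw [← det_of_vec3_rotate]
    exact det_conicPoint_conicPoint_linePoint_of_mul_eq (zpow_add_eq (by ring))
  · show (Matrix.of ![conicPoint (ξ ^ (-3 * i)), linePoint (ξ ^ (3 * j + 1)),
      conicPoint (ξ ^ (3 * (i + j + 0) + 1))]).det = 0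
    rw [det_of_vec3_rotate]
    exact det_conicPoint_conicPoint_linePoint_of_mul_eq (zpow_add_eq (by ring))
  · show (Matrix.of ![conicPoint (ξ ^ (-3 * i)), conicPoint (ξ ^ (-3 * j - 1)),
      linePoint (ξ ^ (-3 * (i + j + k) + 3 * k - 1))]).det = 0
    exact det_conicPoint_conicPoint_linePoint_of_mul_eq (zpow_add_eq (by ring))

/-- The conic-line type light dual multinet of order `2m`: with `ξ` a primitive `3m`-th
root of unity, `H = ⟨ξ³⟩` (elements `ξ^{3j}`), `A = H ∪ H'` encoded as `ℤ × Bool` with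
`(j,s)*(j',t) = (j + j' + [s ∧ t]·k, s xor t)` (so `x'*y' = xy·ξ^{3k}`), `f₁(u) = (u,-1,0)`
on the line and `f₂(u) = (u,u⁻¹,1)` on the conic, and the embeddings
`α₁(x) = f₁(x)`, `α₁(x') = f₂(x⁻¹)`; `α₂(y) = f₁(yξ)`, `α₂(y') = f₂(y⁻¹ξ⁻¹)`;
`α₃(z) = f₁(z⁻¹ξ^{3k-1})`, `α₃(z') = f₂(zξ)`, the points `α₁(a), α₂(b), α₃(a*b)` are
collinear for all `a, b ∈ A`. -/
theorem conic_line_light_dual_multinet {K : Type*} [Field K] (m : ℕ) (hm : 0 < m)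
    (ξ : Kˣ) (hξ : orderOf ξ = 3 * m) (k : ℤ) :
    let f₁ : Kˣ → Fin 3 → K := fun u => ![(u : K), -1, 0]
    let f₂ : Kˣ → Fin 3 → K := fun u => ![(u : K), ((u⁻¹ : Kˣ) : K), 1]
    let α₁ : ℤ × Bool → Fin 3 → K := fun a =>
      if a.2 then f₂ (ξ ^ (-3 * a.1)) else f₁ (ξ ^ (3 * a.1))
    let α₂ : ℤ × Bool → Fin 3 → K := fun a =>
      if a.2 then f₂ (ξ ^ (-3 * a.1 - 1)) else f₁ (ξ ^ (3 * a.1 + 1))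
    let α₃ : ℤ × Bool → Fin 3 → K := fun a =>
      if a.2 then f₂ (ξ ^ (3 * a.1 + 1)) else f₁ (ξ ^ (-3 * a.1 + 3 * k - 1))
    let mul : ℤ × Bool → ℤ × Bool → ℤ × Bool :=
      fun a b => (a.1 + b.1 + if a.2 && b.2 then k else 0, xor a.2 b.2)
    ∀ a b : ℤ × Bool, Matrix.det (Matrix.of ![α₁ a, α₂ b, α₃ (mul a b)]) = 0 :=
  conic_line_light_dual_multinet_general ξ k
end
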